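/- Let φ : ℝ^d × ℝ^d → ℝ be symmetric, bounded, measurable, with finite range R (φ(x,y)=0 if |x−y|>R), lower bound constant B := −inf{φ(x,y) ∧ 0} < ∞, and repulsion A := inf_{|x−y|≤δ} φ(x,y). Consider finitely many cubes Q_j of diameter δ and nonnegative masses u_j := η(Q_j), v_l := ξ(Q_l) where η is supported in Δ = ⊔_{j∈K} Q_j and ξ in Δ^c. If each cube has at most m neighbors, then the quadratic form H := ∑_{j,j'∈K} ∫∫ φ dη dη + 2∑_{j∈K, l∉K} ∫∫ φ dη dξ satisfies H ≥ (A − 2mB) ∑_{j∈K} u_j² − mB ∑_{l∈∂K} v_l². -/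
import Mathlib

open Finset

private lemma aux_prod {B a x y : ℝ} (hB : 0 ≤ B) (ha : -B ≤ a) (hx : 0 ≤ x) (hy : 0 ≤ y) :
    -(B/2)*(x^2+y^2) ≤ a*x*y := by
  nlinarith [mul_nonneg hB (sq_nonneg (x-y)), mul_le_mul_of_nonneg_right ha (mul_nonneg hx hy)]

private lemma row_bound {ι : Type*} [DecidableEq ι] (s t : Finset ι) (m : ℕ)
    (h : t.card ≤ m) (c : ℝ) (hc : 0 ≤ c) :
    ∑ x ∈ s, (if x ∈ t then c else 0) ≤ (m : ℝ) * c := by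
  rw [Finset.sum_ite_mem, Finset.sum_const, nsmul_eq_mul]
  have : ((s ∩ t).card : ℝ) ≤ (m : ℝ) := by
    exact_mod_cast le_trans (Finset.card_le_card (Finset.inter_subset_right)) h
  exact mul_le_mul_of_nonneg_right this hc

open scoped Classical in
/-- Stability estimate (Lemma 3.3, finite-dimensional form): for a symmetric matrix
`φ` with diagonal entries `≥ A`, entries `≥ −B`, vanishing off the neighbor structure
`N` with at most `m` neighbors per row, and nonnegative vectors `u`, `v`,
`∑_{j,j'∈K} φ_{jj'} u_j u_{j'} + 2∑_{j∈K,l∉K} φ_{jl} u_j v_l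
  ≥ (A − 2mB)∑_{j∈K} u_j² − mB ∑_{l∉K, l neighbor of K} v_l²`. -/
theorem stability_estimate {ι : Type*} [Fintype ι] [DecidableEq ι]
    (A B : ℝ) (hB : 0 ≤ B) (m : ℕ)
    (φ : ι → ι → ℝ) (hsym : ∀ j l, φ j l = φ l j)
    (N : ι → Finset ι) (hNsym : ∀ j l, l ∈ N j ↔ j ∈ N l) (hNself : ∀ j, j ∉ N j)
    (hdiag : ∀ j, A ≤ φ j j) (hlow : ∀ j l, -B ≤ φ j l)
    (hzero : ∀ j l, j ≠ l → l ∉ N j → φ j l = 0)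
    (hcard : ∀ j, (N j).card ≤ m)
    (u v : ι → ℝ) (hu : ∀ j, 0 ≤ u j) (hv : ∀ l, 0 ≤ v l)
    (K : Finset ι) :
    (A - 2 * m * B) * ∑ j ∈ K, (u j) ^ 2
      - m * B * ∑ l ∈ Kᶜ.filter (fun l => ∃ j ∈ K, l ∈ N j), (v l) ^ 2
    ≤ ∑ j ∈ K, ∑ j' ∈ K, φ j j' * u j * u j'
      + 2 * ∑ j ∈ K, ∑ l ∈ Kᶜ, φ j l * u j * v l := by
  set S := ∑ j ∈ K, (u j) ^ 2 with hSdef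
  set T := ∑ l ∈ Kᶜ.filter (fun l => ∃ j ∈ K, l ∈ N j), (v l) ^ 2 with hTdef
  have hS0 : 0 ≤ S := Finset.sum_nonneg fun j _ => sq_nonneg _
  -- Part 1: the K×K sum
  have h1 : A * S - (m : ℝ) * B * S ≤ ∑ j ∈ K, ∑ j' ∈ K, φ j j' * u j * u j' := by
    have hterm : ∀ j ∈ K, ∀ j' ∈ K,
        (if j' = j then A * u j ^ 2 else 0)
          + (if j' ∈ N j then -(B/2) * (u j ^ 2 + u j' ^ 2) else 0)
        ≤ φ j j' * u j * u j' := by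
      intro j _ j' _
      by_cases h : j' = j
      · subst h
        simp only [if_pos rfl, if_neg (hNself j'), add_zero, if_true]
        have := mul_le_mul_of_nonneg_right (hdiag j') (mul_nonneg (hu j') (hu j'))
        nlinarith
      · simp only [if_neg h, zero_add]
        by_cases hn : j' ∈ N j
        · simp only [if_pos hn]
          exact aux_prod hB (hlow j j') (hu j) (hu j')
        · rw [if_neg hn, hzero j j' (fun e => h e.symm) hn]
          simp
    have hsum := Finset.sum_le_sum (fun j hj => Finset.sum_le_sum (hterm j hj))
    refine le_trans ?_ hsum
    rw [show (∑ j ∈ K, ∑ j' ∈ K,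
        ((if j' = j then A * u j ^ 2 else 0)
          + (if j' ∈ N j then -(B/2) * (u j ^ 2 + u j' ^ 2) else 0)))
      = (∑ j ∈ K, ∑ j' ∈ K, (if j' = j then A * u j ^ 2 else 0))
        + ∑ j ∈ K, ∑ j' ∈ K, (if j' ∈ N j then -(B/2) * (u j ^ 2 + u j' ^ 2) else 0) by
        rw [← Finset.sum_add_distrib]; exact Finset.sum_congr rfl fun j _ => Finset.sum_add_distrib]
    have e1 : (∑ j ∈ K, ∑ j' ∈ K, (if j' = j then A * u j ^ 2 else 0)) = A * S := by
      rw [hSdef, Finset.mul_sum]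
      refine Finset.sum_congr rfl fun j hj => ?_
      rw [Finset.sum_ite_eq' K j (fun _ => A * u j ^ 2), if_pos hj]
    rw [e1]
    have e2 : ∀ j ∈ K, ∀ j' ∈ K,
        (if j' ∈ N j then -(B/2) * (u j ^ 2 + u j' ^ 2) else 0)
        = -(B/2) * ((if j' ∈ N j then u j ^ 2 else 0) + (if j' ∈ N j then u j' ^ 2 else 0)) := by
      intro j _ j' _; by_cases hn : j' ∈ N j <;> simp [hn]
    rw [Finset.sum_congr rfl fun j hj => Finset.sum_congr rfl (e2 j hj)]
    simp only [← Finset.mul_sum]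
    have hX1 : ∑ j ∈ K, ∑ j' ∈ K, (if j' ∈ N j then u j ^ 2 else 0) ≤ (m:ℝ) * S := by
      rw [hSdef, Finset.mul_sum]
      exact Finset.sum_le_sum fun j _ => row_bound K (N j) m (hcard j) _ (sq_nonneg _)
    have hX2 : ∑ j ∈ K, ∑ j' ∈ K, (if j' ∈ N j then u j' ^ 2 else 0) ≤ (m:ℝ) * S := by
      rw [Finset.sum_comm]
      have : ∀ j' j : ι, (if j' ∈ N j then u j' ^ 2 else 0) = (if j ∈ N j' then u j' ^ 2 else 0) := by
        intro j' j; simp only [hNsym j j']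
      simp only [this]
      rw [hSdef, Finset.mul_sum]
      exact Finset.sum_le_sum fun j' _ => row_bound K (N j') m (hcard j') _ (sq_nonneg _)
    have hsplit : ∑ j ∈ K, ∑ j' ∈ K,
        ((if j' ∈ N j then u j ^ 2 else 0) + (if j' ∈ N j then u j' ^ 2 else 0))
        = (∑ j ∈ K, ∑ j' ∈ K, (if j' ∈ N j then u j ^ 2 else 0))
          + ∑ j ∈ K, ∑ j' ∈ K, (if j' ∈ N j then u j' ^ 2 else 0) := by
      rw [← Finset.sum_add_distrib]
      exact Finset.sum_congr rfl fun j _ => Finset.sum_add_distrib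
    rw [hsplit]
    nlinarith [hX1, hX2]
  -- Part 2: the cross sum
  have h2 : -((m:ℝ) * B / 2) * S - ((m:ℝ) * B / 2) * T
      ≤ ∑ j ∈ K, ∑ l ∈ Kᶜ, φ j l * u j * v l := by
    have hterm : ∀ j ∈ K, ∀ l ∈ Kᶜ,
        (if l ∈ N j then -(B/2) * (u j ^ 2 + v l ^ 2) else 0) ≤ φ j l * u j * v l := by
      intro j hj l hl
      by_cases hn : l ∈ N j
      · simp only [if_pos hn]
        exact aux_prod hB (hlow j l) (hu j) (hv l)
      · have hne : j ≠ l := by rintro rfl; exact (Finset.mem_compl.mp hl) hj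
        rw [if_neg hn, hzero j l hne hn]
        simp
    have hsum := Finset.sum_le_sum (fun j hj => Finset.sum_le_sum (hterm j hj))
    refine le_trans ?_ hsum
    have e2 : ∀ (j l : ι),
        (if l ∈ N j then -(B/2) * (u j ^ 2 + v l ^ 2) else 0)
        = -(B/2) * ((if l ∈ N j then u j ^ 2 else 0) + (if l ∈ N j then v l ^ 2 else 0)) := by
      intro j l; by_cases hn : l ∈ N j <;> simp [hn]
    simp only [e2, ← Finset.mul_sum]
    have hsplit : ∑ j ∈ K, ∑ l ∈ Kᶜ,
        ((if l ∈ N j then u j ^ 2 else 0) + (if l ∈ N j then v l ^ 2 else 0))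
        = (∑ j ∈ K, ∑ l ∈ Kᶜ, (if l ∈ N j then u j ^ 2 else 0))
          + ∑ j ∈ K, ∑ l ∈ Kᶜ, (if l ∈ N j then v l ^ 2 else 0) := by
      rw [← Finset.sum_add_distrib]
      exact Finset.sum_congr rfl fun j _ => Finset.sum_add_distrib
    rw [hsplit]
    have hY1 : ∑ j ∈ K, ∑ l ∈ Kᶜ, (if l ∈ N j then u j ^ 2 else 0) ≤ (m:ℝ) * S := by
      rw [hSdef, Finset.mul_sum]
      exact Finset.sum_le_sum fun j _ => row_bound Kᶜ (N j) m (hcard j) _ (sq_nonneg _)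
    have hY2 : ∑ j ∈ K, ∑ l ∈ Kᶜ, (if l ∈ N j then v l ^ 2 else 0) ≤ (m:ℝ) * T := by
      rw [Finset.sum_comm]
      have e3 : ∀ l ∈ Kᶜ, ∑ j ∈ K, (if l ∈ N j then v l ^ 2 else 0)
          = ((K ∩ N l).card : ℝ) * v l ^ 2 := by
        intro l _
        have : ∀ j : ι, (if l ∈ N j then v l ^ 2 else 0) = (if j ∈ N l then v l ^ 2 else 0) := by
          intro j; simp only [hNsym j l]
        simp only [this]
        rw [Finset.sum_ite_mem, Finset.sum_const, nsmul_eq_mul]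
      rw [Finset.sum_congr rfl e3]
      have hfil : ∑ l ∈ Kᶜ.filter (fun l => ∃ j ∈ K, l ∈ N j),
          (((K ∩ N l).card : ℝ) * v l ^ 2)
          = ∑ l ∈ Kᶜ, (((K ∩ N l).card : ℝ) * v l ^ 2) := by
        refine Finset.sum_filter_of_ne fun l _ hne => ?_
        have hcard_ne : (K ∩ N l).Nonempty := by
          rw [Finset.nonempty_iff_ne_empty]
          intro he
          rw [he] at hne
          simp at hne
        obtain ⟨j, hjmem⟩ := hcard_ne
        rw [Finset.mem_inter] at hjmem
        exact ⟨j, hjmem.1, (hNsym j l).mpr hjmem.2⟩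
      rw [← hfil, hTdef, Finset.mul_sum]
      refine Finset.sum_le_sum fun l _ => ?_
      have : ((K ∩ N l).card : ℝ) ≤ (m : ℝ) := by
        exact_mod_cast le_trans (Finset.card_le_card Finset.inter_subset_right) (hcard l)
      exact mul_le_mul_of_nonneg_right this (sq_nonneg _)
    have hT0 : 0 ≤ T := Finset.sum_nonneg fun l _ => sq_nonneg _
    nlinarith [hY1, hY2]
  linarith [h1, h2]
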